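/- arXiv:1311.2683 — 2 statements merged into one kernel-verified Lean document; each statement's English description precedes it below -/
import Mathlib

section
/- Let A be an algebra, σ a congruence on A, and U ⊆ A. Then the set Tw(A, U) of σ-twins of the identity on U is a normal subgroup of the group Π(A, U) of permutations of U realized by unary polynomials of A. -/
/-- A purely functional first-order signature. -/
structure Signature where
  ops : Type
  arity : ops → ℕ

/-- An algebra for a signature: an interpretation of each operation symbol. -/
structure UAlg (σ : Signature) (A : Type) where
  interp : ∀ o : σ.ops, (Fin (σ.arity o) → A) → A

/-- Terms in `n` variables over a signature. -/
inductive Term (σ : Signature) (n : ℕ) : Type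
  | var : Fin n → Term σ n
  | op : (o : σ.ops) → (Fin (σ.arity o) → Term σ n) → Term σ n

/-- Evaluation of a term at a tuple. -/
def Term.eval {σ : Signature} {A : Type} (Alg : UAlg σ A) {n : ℕ} :
    Term σ n → (Fin n → A) → A
  | .var i, v => v i
  | .op o ts, v => Alg.interp o fun j => (ts j).eval Alg v

/-- A congruence: an equivalence relation compatible with all operations. -/
def IsCongruence {σ : Signature} {A : Type} (Alg : UAlg σ A) (r : A → A → Prop) : Prop :=
  Equivalence r ∧ ∀ (o : σ.ops) (x y : Fin (σ.arity o) → A),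
    (∀ i, r (x i) (y i)) → r (Alg.interp o x) (Alg.interp o y)

/-- A `k`-ary polynomial operation: a term operation with parameters. -/
def IsPolynomial {σ : Signature} {A : Type} (Alg : UAlg σ A) {k : ℕ}
    (f : (Fin k → A) → A) : Prop :=
  ∃ (n : ℕ) (t : Term σ (k + n)) (params : Fin n → A),
    ∀ x : Fin k → A, f x = t.eval Alg (Fin.append x params)

/-- A unary polynomial operation. -/
def IsUnaryPolynomial {σ : Signature} {A : Type} (Alg : UAlg σ A) (f : A → A) : Prop :=
  IsPolynomial Alg (k := 1) fun x => f (x 0)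

/-- The term condition TermCond(α, β; γ). -/
def TermCond {σ : Signature} {A : Type} (Alg : UAlg σ A) (α β γ : A → A → Prop) : Prop :=
  ∀ (n m : ℕ) (t : Term σ (n + m)) (a₁ a₂ : Fin n → A) (b₁ b₂ : Fin m → A),
    (∀ i, α (a₁ i) (a₂ i)) → (∀ i, β (b₁ i) (b₂ i)) →
    γ (t.eval Alg (Fin.append a₁ b₁)) (t.eval Alg (Fin.append a₁ b₂)) →
    γ (t.eval Alg (Fin.append a₂ b₁)) (t.eval Alg (Fin.append a₂ b₂))

/-- β is strongly abelian over γ. -/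
def StronglyAbelianOver {σ : Signature} {A : Type} (Alg : UAlg σ A)
    (β γ : A → A → Prop) : Prop :=
  ∀ (n m : ℕ) (t : Term σ (n + m)) (a₁ a₂ : Fin n → A) (b₁ b₂ b₃ : Fin m → A),
    (∀ i, β (a₁ i) (a₂ i)) → (∀ i, β (b₁ i) (b₂ i)) → (∀ i, β (b₂ i) (b₃ i)) →
    γ (t.eval Alg (Fin.append a₁ b₁)) (t.eval Alg (Fin.append a₂ b₂)) →
    γ (t.eval Alg (Fin.append a₁ b₃)) (t.eval Alg (Fin.append a₂ b₃))

/-- The least congruence containing a binary relation. -/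
def congClosure {σ : Signature} {A : Type} (Alg : UAlg σ A) (R : A → A → Prop) :
    A → A → Prop :=
  fun a b => ∀ r, IsCongruence Alg r → (∀ x y, R x y → r x y) → r a b

/-- A subset closed under the operations. -/
def IsSubalgebra {σ : Signature} {A : Type} (Alg : UAlg σ A) (s : Set A) : Prop :=
  ∀ (o : σ.ops) (x : Fin (σ.arity o) → A), (∀ j, x j ∈ s) → Alg.interp o x ∈ s

/-- The power algebra `A^I`. -/
def UAlg.pow {σ : Signature} {A : Type} (Alg : UAlg σ A) (I : Type) :
    UAlg σ (I → A) :=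
  ⟨fun o x i => Alg.interp o fun j => x j i⟩

/-- The product of a family of algebras. -/
def UAlg.pi {σ : Signature} {ι : Type} {A : ι → Type} (Alg : ∀ i, UAlg σ (A i)) :
    UAlg σ (∀ i, A i) :=
  ⟨fun o x i => (Alg i).interp o fun j => x j i⟩

/-- The binary product of two algebras. -/
def UAlg.prod2 {σ : Signature} {A B : Type} (AlgA : UAlg σ A) (AlgB : UAlg σ B) :
    UAlg σ (A × B) :=
  ⟨fun o x => (AlgA.interp o fun j => (x j).1, AlgB.interp o fun j => (x j).2)⟩

/-- The algebra structure on a subalgebra. -/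
def UAlg.sub {σ : Signature} {A : Type} (Alg : UAlg σ A) (s : Set A)
    (hs : IsSubalgebra Alg s) : UAlg σ s :=
  ⟨fun o x => ⟨Alg.interp o fun j => (x j : A), hs o _ fun j => (x j).2⟩⟩

/-- Homomorphisms of algebras. -/
def IsHom {σ : Signature} {A B : Type} (AlgA : UAlg σ A) (AlgB : UAlg σ B)
    (f : A → B) : Prop :=
  ∀ (o : σ.ops) (x : Fin (σ.arity o) → A), f (AlgA.interp o x) = AlgB.interp o (f ∘ x)

/-- An idempotent unary polynomial. -/
def IsIdempotentPoly {σ : Signature} {A : Type} (Alg : UAlg σ A) (e : A → A) : Prop :=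
  IsUnaryPolynomial Alg e ∧ ∀ x, e (e x) = e x

/-- A (⊥, δ)-minimal set. -/
def IsMinimalSet {σ : Signature} {A : Type} (Alg : UAlg σ A) (δ : A → A → Prop)
    (U : Set A) : Prop :=
  (∃ e, IsIdempotentPoly Alg e ∧ U = Set.range e ∧ ∃ a b, δ a b ∧ e a ≠ e b) ∧
  ∀ e', IsIdempotentPoly Alg e' → Set.range e' ⊆ U → (∃ a b, δ a b ∧ e' a ≠ e' b) →
    Set.range e' = U

/-- μ is an atom of the congruence lattice. -/
def IsAtomCong {σ : Signature} {A : Type} (Alg : UAlg σ A) (μ : A → A → Prop) : Prop :=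
  IsCongruence Alg μ ∧ μ ≠ (fun a b => a = b) ∧
  ∀ θ, IsCongruence Alg θ → (∀ a b, θ a b → μ a b) → θ = (fun a b => a = b) ∨ θ = μ

/-- A (⊥, μ)-trace in a minimal set U. -/
def IsTrace {A : Type} (μ : A → A → Prop) (U N : Set A) : Prop :=
  (∃ a ∈ U, N = {x ∈ U | μ x a}) ∧ ∃ x ∈ N, ∃ y ∈ N, x ≠ y

/-- The body of a minimal set: the union of its traces. -/
def Body {A : Type} (μ : A → A → Prop) (U : Set A) : Set A :=
  {x | ∃ N, IsTrace μ U N ∧ x ∈ N}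

/-- Polynomial permutations of U (as functions A → A which are bijective on U). -/
def PolPermFun {σ : Signature} {A : Type} (Alg : UAlg σ A) (U : Set A) : Set (A → A) :=
  { p | IsUnaryPolynomial Alg p ∧ Set.BijOn p U U }

/-- Subdirect irreducibility: there is a pair contained in every nontrivial congruence. -/
def IsSI {σ : Signature} {B : Type} (Alg : UAlg σ B) : Prop :=
  ∃ a b : B, a ≠ b ∧ ∀ θ, IsCongruence Alg θ → θ ≠ (fun x y => x = y) → θ a b

/-- The subalgebra generated by a set. -/
def genSub {σ : Signature} {B : Type} (Alg : UAlg σ B) (s : Set B) : Set B :=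
  ⋂₀ {t | IsSubalgebra Alg t ∧ s ⊆ t}

/-- A strongly solvable congruence: connected to ⊥ by strongly abelian covers. -/
def IsStronglySolvable {σ : Signature} {A : Type} (Alg : UAlg σ A)
    (s : A → A → Prop) : Prop :=
  ∃ (n : ℕ) (c : Fin (n + 1) → (A → A → Prop)),
    c 0 = (fun a b => a = b) ∧ c (Fin.last n) = s ∧
    (∀ i, IsCongruence Alg (c i)) ∧
    ∀ i : Fin n, (∀ a b, c i.castSucc a b → c i.succ a b) ∧
      StronglyAbelianOver Alg (c i.succ) (c i.castSucc)

/-- The set of n-ary term operations of an algebra. -/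
def TermFun {σ : Signature} {A : Type} (Alg : UAlg σ A) (n : ℕ) :
    Set ((Fin n → A) → A) :=
  { g | ∃ t : Term σ n, g = fun v => t.eval Alg v }

/-- The group of permutations of U realized by unary polynomials of A. -/
def PolPerm {σ : Signature} {A : Type} (Alg : UAlg σ A) (U : Set A) :
    Set (Equiv.Perm U) :=
  { f | ∃ p : A → A, IsUnaryPolynomial Alg p ∧ ∀ u : U, p (u : A) = ((f u : U) : A) }

/-- The σ-twins of the identity on U. -/
def TwinPerm {σ : Signature} {A : Type} (Alg : UAlg σ A) (σc : A → A → Prop)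
    (U : Set A) : Set (Equiv.Perm U) :=
  { f | ∃ (n : ℕ) (t : Term σ (n + 1)) (d e : Fin n → A),
      (∀ i, σc (d i) (e i)) ∧
      (∀ u : U, t.eval Alg (Fin.cons (u : A) e) = (u : A)) ∧
      (∀ u : U, t.eval Alg (Fin.cons (u : A) d) = ((f u : U) : A)) }

/-
A σ-twin of the identity is the restriction to U of the first member of a pair
(t(·, d̄), t(·, ē)) of unary polynomials given by one term with σ-related parameter tuples.
Such twin pairs contain (id, id), are closed under componentwise composition (substitute
one term into the other and concatenate the parameters), and contain (p, p) for every unary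
polynomial p, since σ is reflexive. Hence the twins of the identity form a submonoid of
Π(A, U), stable under conjugation by any g ∈ Π(A, U) realized by p, as long as g⁻¹ is also
realized by a polynomial q: use (p ∘ F ∘ q, p ∘ G ∘ q). Because A is finite, Π(A, U) is a
finite group, so every submonoid of it is closed under inverses; this gives both the
inverse of a twin and the polynomial realizing g⁻¹.
-/

theorem Submonoid.inv_mem_of_finite {G : Type*} [Group G] [Finite G] (S : Submonoid G)
    {x : G} (hx : x ∈ S) : x⁻¹ ∈ S :=
  Submonoid.powers_le.mpr hx <|
    mem_powers_iff_mem_zpowers.mpr (Subgroup.inv_mem _ (Subgroup.mem_zpowers x))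

variable {σ : Signature} {A : Type}

namespace Term

def subst {n m : ℕ} (ρ : Fin n → Term σ m) : Term σ n → Term σ m
  | .var i => ρ i
  | .op o ts => .op o fun j => (ts j).subst ρ

theorem eval_subst (Alg : UAlg σ A) {n m : ℕ} (ρ : Fin n → Term σ m) (t : Term σ n)
    (v : Fin m → A) : (t.subst ρ).eval Alg v = t.eval Alg fun i => (ρ i).eval Alg v := by
  induction t with
  | var i => rfl
  | op o ts ih => simp only [subst, eval, ih]

theorem eval_subst_var (Alg : UAlg σ A) {n m : ℕ} (ρ : Fin n → Fin m) (t : Term σ n)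
    (v : Fin m → A) : (t.subst fun i => .var (ρ i)).eval Alg v = t.eval Alg (v ∘ ρ) :=
  eval_subst Alg _ t v

end Term

theorem isUnaryPolynomial_iff_exists_cons (Alg : UAlg σ A) (p : A → A) :
    IsUnaryPolynomial Alg p ↔
      ∃ (n : ℕ) (t : Term σ (n + 1)) (c : Fin n → A), ∀ x, p x = t.eval Alg (Fin.cons x c) := by
  constructor
  · rintro ⟨n, t, c, hc⟩
    refine ⟨n, t.subst fun i => .var (Fin.cast (Nat.add_comm 1 n) i), c, fun x => ?_⟩
    rw [Term.eval_subst_var, ← Fin.append_left_eq_cons (fun _ => x) c]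
    exact hc fun _ => x
  · rintro ⟨n, t, c, hc⟩
    refine ⟨n, t.subst fun i => .var (Fin.cast (Nat.add_comm n 1) i), c, fun x => ?_⟩
    rw [Term.eval_subst_var, Fin.append_left_eq_cons]
    exact (hc (x 0)).trans (congrArg _ (funext fun i => by simp))

def IsTwinPair (Alg : UAlg σ A) (r : A → A → Prop) (F G : A → A) : Prop :=
  ∃ (n : ℕ) (t : Term σ (n + 1)) (d e : Fin n → A), (∀ i, r (d i) (e i)) ∧
    (∀ x, F x = t.eval Alg (Fin.cons x d)) ∧ (∀ x, G x = t.eval Alg (Fin.cons x e))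

namespace IsTwinPair

variable {Alg : UAlg σ A} {r : A → A → Prop}

theorem isUnaryPolynomial_left {F G : A → A} (h : IsTwinPair Alg r F G) :
    IsUnaryPolynomial Alg F := by
  obtain ⟨n, t, d, -, -, hF, -⟩ := h
  exact (isUnaryPolynomial_iff_exists_cons Alg F).mpr ⟨n, t, d, hF⟩

theorem of_isUnaryPolynomial (hr : ∀ a, r a a) {p : A → A} (hp : IsUnaryPolynomial Alg p) :
    IsTwinPair Alg r p p := by
  obtain ⟨n, t, c, hc⟩ := (isUnaryPolynomial_iff_exists_cons Alg p).mp hp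
  exact ⟨n, t, c, c, fun i => hr (c i), hc, hc⟩

theorem id : IsTwinPair Alg r id id :=
  ⟨0, .var 0, Fin.elim0, Fin.elim0, fun i => i.elim0, fun _ => rfl, fun _ => rfl⟩

theorem comp {F₁ G₁ F₂ G₂ : A → A} (h₁ : IsTwinPair Alg r F₁ G₁)
    (h₂ : IsTwinPair Alg r F₂ G₂) : IsTwinPair Alg r (F₁ ∘ F₂) (G₁ ∘ G₂) := by
  obtain ⟨n₁, t₁, d₁, e₁, hde₁, hF₁, hG₁⟩ := h₁
  obtain ⟨n₂, t₂, d₂, e₂, hde₂, hF₂, hG₂⟩ := h₂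
  -- variables of the composite: `x`, then the parameters of `t₂`, then those of `t₁`
  let ι₂ : Fin (n₂ + 1) → Fin (n₂ + n₁ + 1) := Fin.cons 0 fun j => (Fin.castAdd n₁ j).succ
  let ρ : Fin (n₁ + 1) → Term σ (n₂ + n₁ + 1) :=
    Fin.cons (t₂.subst fun j => .var (ι₂ j)) fun i => .var (Fin.natAdd n₂ i).succ
  have eval_comp : ∀ (x : A) (c₁ : Fin n₁ → A) (c₂ : Fin n₂ → A),
      (t₁.subst ρ).eval Alg (Fin.cons x (Fin.append c₂ c₁)) =
        t₁.eval Alg (Fin.cons (t₂.eval Alg (Fin.cons x c₂)) c₁) := by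
    intro x c₁ c₂
    rw [Term.eval_subst]
    congr 1
    funext i
    refine Fin.cases ?_ (fun k => ?_) i
    · rw [Fin.cons_zero]
      change (t₂.subst fun j => .var (ι₂ j)).eval Alg _ = _
      rw [Term.eval_subst_var]
      congr 1
      funext j
      refine Fin.cases ?_ (fun l => ?_) j <;> simp [ι₂]
    · simp [ρ, Term.eval]
  refine ⟨n₂ + n₁, t₁.subst ρ, Fin.append d₂ d₁, Fin.append e₂ e₁, fun i => ?_,
    fun x => ?_, fun x => ?_⟩
  · refine Fin.addCases (fun j => ?_) (fun j => ?_) i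
    · simpa only [Fin.append_left] using hde₂ j
    · simpa only [Fin.append_right] using hde₁ j
  · rw [eval_comp, ← hF₂, ← hF₁, Function.comp_apply]
  · rw [eval_comp, ← hG₂, ← hG₁, Function.comp_apply]

end IsTwinPair

theorem IsUnaryPolynomial.comp {Alg : UAlg σ A} {p q : A → A} (hp : IsUnaryPolynomial Alg p)
    (hq : IsUnaryPolynomial Alg q) : IsUnaryPolynomial Alg (p ∘ q) :=
  ((IsTwinPair.of_isUnaryPolynomial (r := Eq) (fun _ => rfl) hp).comp
    (.of_isUnaryPolynomial (fun _ => rfl) hq)).isUnaryPolynomial_left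

section Perm

variable (Alg : UAlg σ A) (U : Set A)

theorem mem_twinPerm_iff {r : A → A → Prop} {f : Equiv.Perm U} :
    f ∈ TwinPerm Alg r U ↔ ∃ F G : A → A, IsTwinPair Alg r F G ∧
      (∀ u : U, F u = (f u : A)) ∧ ∀ u : U, G u = u := by
  constructor
  · rintro ⟨n, t, d, e, hde, he, hd⟩
    exact ⟨fun x => t.eval Alg (Fin.cons x d), fun x => t.eval Alg (Fin.cons x e),
      ⟨n, t, d, e, hde, fun _ => rfl, fun _ => rfl⟩, hd, he⟩
  · rintro ⟨F, G, ⟨n, t, d, e, hde, hF, hG⟩, hFf, hG1⟩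
    exact ⟨n, t, d, e, hde, fun u => (hG u).symm.trans (hG1 u),
      fun u => (hF u).symm.trans (hFf u)⟩

def polPermSubmonoid : Submonoid (Equiv.Perm U) where
  carrier := PolPerm Alg U
  one_mem' := ⟨_root_.id, IsTwinPair.id.isUnaryPolynomial_left (r := Eq), fun _ => rfl⟩
  mul_mem' := by
    rintro f g ⟨p, hp, hpf⟩ ⟨q, hq, hqg⟩
    exact ⟨p ∘ q, hp.comp hq, fun u => by rw [Function.comp_apply, hqg, hpf]; rfl⟩

def twinPermSubmonoid (r : A → A → Prop) : Submonoid (Equiv.Perm U) where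
  carrier := TwinPerm Alg r U
  one_mem' := (mem_twinPerm_iff Alg U).mpr
    ⟨_root_.id, _root_.id, IsTwinPair.id, fun _ => rfl, fun _ => rfl⟩
  mul_mem' := by
    intro f g hf hg
    obtain ⟨F₁, G₁, h₁, hF₁, hG₁⟩ := (mem_twinPerm_iff Alg U).mp hf
    obtain ⟨F₂, G₂, h₂, hF₂, hG₂⟩ := (mem_twinPerm_iff Alg U).mp hg
    refine (mem_twinPerm_iff Alg U).mpr ⟨F₁ ∘ F₂, G₁ ∘ G₂, h₁.comp h₂, fun u => ?_, fun u => ?_⟩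
    · rw [Function.comp_apply, hF₂, hF₁]; rfl
    · rw [Function.comp_apply, hG₂, hG₁]

theorem twinPerm_subset_polPerm (r : A → A → Prop) : TwinPerm Alg r U ⊆ PolPerm Alg U := by
  intro f hf
  obtain ⟨F, _, hFG, hF, -⟩ := (mem_twinPerm_iff Alg U).mp hf
  exact ⟨F, hFG.isUnaryPolynomial_left, hF⟩

theorem conj_mem_twinPerm {r : A → A → Prop} (hr : ∀ a, r a a) {f g : Equiv.Perm U}
    (hf : f ∈ TwinPerm Alg r U) (hg : g ∈ PolPerm Alg U) (hg' : g⁻¹ ∈ PolPerm Alg U) :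
    g * f * g⁻¹ ∈ TwinPerm Alg r U := by
  obtain ⟨F, G, hFG, hF, hG⟩ := (mem_twinPerm_iff Alg U).mp hf
  obtain ⟨p, hp, hpg⟩ := hg
  obtain ⟨q, hq, hqg⟩ := hg'
  refine (mem_twinPerm_iff Alg U).mpr ⟨p ∘ F ∘ q, p ∘ G ∘ q,
    (IsTwinPair.of_isUnaryPolynomial hr hp).comp (hFG.comp (.of_isUnaryPolynomial hr hq)),
    fun u => ?_, fun u => ?_⟩
  · simp only [Function.comp_apply, hqg, hF, hpg, Equiv.Perm.mul_apply]
  · simp only [Function.comp_apply, hqg, Equiv.Perm.coe_inv, hG, hpg, Equiv.apply_symm_apply]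

end Perm

/-- The set of σ-twins of the identity on U is a normal subgroup of the
group of polynomial permutations of U. -/
theorem stmt_4 {σ : Signature} {A : Type} [Fintype A] (Alg : UAlg σ A)
    (σc : A → A → Prop) (hσ : IsCongruence Alg σc) (U : Set A) :
    TwinPerm Alg σc U ⊆ PolPerm Alg U ∧
    (1 : Equiv.Perm U) ∈ TwinPerm Alg σc U ∧
    (∀ f g : Equiv.Perm U, f ∈ TwinPerm Alg σc U → g ∈ TwinPerm Alg σc U →
      f * g ∈ TwinPerm Alg σc U) ∧
    (∀ f : Equiv.Perm U, f ∈ TwinPerm Alg σc U → f⁻¹ ∈ TwinPerm Alg σc U) ∧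
    (∀ f : Equiv.Perm U, f ∈ TwinPerm Alg σc U → ∀ g : Equiv.Perm U,
      g ∈ PolPerm Alg U → g * f * g⁻¹ ∈ TwinPerm Alg σc U) := by
  let T := twinPermSubmonoid Alg U σc
  refine ⟨twinPerm_subset_polPerm Alg U σc, T.one_mem, fun _ _ => T.mul_mem,
    fun _ => T.inv_mem_of_finite, fun f hf g hg => ?_⟩
  exact conj_mem_twinPerm Alg U hσ.1.refl hf hg ((polPermSubmonoid Alg U).inv_mem_of_finite hg)
end

section
/- Let V be a locally finite variety in which every subdirectly irreducible algebra is finite of cardinality at most n for some fixed n. Then V is residually finite. Conversely (Quackenbush's argument), if a locally finite variety V contains an infinite subdirectly irreducible algebra, then V contains arbitrarily large finite subdirectly irreducible algebras; hence if V has only finitely many finite subdirectly irreducible algebras and is locally finite, every subdirectly irreducible member of V is finite and V has a finite residual bound. -/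
/-!
Every pair `a ≠ b` of an algebra is separated by a subdirectly irreducible quotient: divide
by a congruence that is maximal (Zorn) among those not identifying `a` and `b`. Under a
bound on the size of the SI members of `V` these quotients are finite, which gives (1).

For (2) (Quackenbush), let `B` be infinite SI with monolith pair `(a, b)` and pick distinct
`c₁, …, cₘ`. Since `(a, b) ∈ Cg(cᵢ, cⱼ)` and congruence generation is finitary, the fact
is already forced inside every subalgebra containing a suitable finite set. The subalgebra
`S` generated by these finite sets, `a`, `b` and the `cᵢ` is finite by local finiteness,
and an SI quotient of `S` separating `a` and `b` keeps the `cᵢ` apart, so it has at least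
`m` elements. Part (3) combines (1) and (2).
-/

section Congruence

variable {σ : Signature} {A B : Type} {Alg : UAlg σ A} {AlgB : UAlg σ B}

theorem isCongruence_eq (Alg : UAlg σ A) : IsCongruence Alg (fun x y => x = y) :=
  ⟨eq_equivalence, fun o _ _ h => congrArg (Alg.interp o) (funext h)⟩

theorem IsCongruence.comap {f : A → B} (hf : IsHom Alg AlgB f) {ψ : B → B → Prop}
    (hψ : IsCongruence AlgB ψ) : IsCongruence Alg (fun x y => ψ (f x) (f y)) := by
  refine ⟨⟨fun x => hψ.1.refl (f x), hψ.1.symm, hψ.1.trans⟩, fun o x y h => ?_⟩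
  show ψ (f _) (f _)
  rw [hf o x, hf o y]
  exact hψ.2 o (f ∘ x) (f ∘ y) h

theorem isCongruence_ker {f : A → B} (hf : IsHom Alg AlgB f) :
    IsCongruence Alg (fun x y => f x = f y) :=
  (isCongruence_eq AlgB).comap hf

theorem isCongruence_exists_mem_of_isChain {c : Set (A → A → Prop)}
    (hc : IsChain (· ≤ ·) c) (hne : c.Nonempty) (hcong : ∀ r ∈ c, IsCongruence Alg r) :
    IsCongruence Alg (fun x y => ∃ r ∈ c, r x y) := by
  obtain ⟨r₀, hr₀⟩ := hne
  refine ⟨⟨fun x => ⟨r₀, hr₀, (hcong r₀ hr₀).1.refl x⟩,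
    fun ⟨r, hr, hxy⟩ => ⟨r, hr, (hcong r hr).1.symm hxy⟩, ?_⟩, fun o x y h => ?_⟩
  · rintro x y z ⟨r, hr, hxy⟩ ⟨r', hr', hyz⟩
    rcases hc.total hr hr' with hle | hle
    · exact ⟨r', hr', (hcong r' hr').1.trans (hle x y hxy) hyz⟩
    · exact ⟨r, hr, (hcong r hr).1.trans hxy (hle y z hyz)⟩
  · classical
    choose r hr hxy using h
    have : Nonempty c := ⟨⟨r₀, hr₀⟩⟩
    obtain ⟨⟨t, ht⟩, hle⟩ :=
      hc.directedOn.directed_val.finset_le (Finset.univ.image fun i => ⟨r i, hr i⟩)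
    have hrt (i) : r i ≤ t := hle ⟨r i, hr i⟩ (Finset.mem_image_of_mem _ (Finset.mem_univ i))
    exact ⟨t, ht, (hcong t ht).2 o x y fun i => hrt i _ _ (hxy i)⟩

theorem exists_maximal_isCongruence_not_rel (Alg : UAlg σ A) {a b : A} (hab : a ≠ b) :
    ∃ θ, Maximal (fun r => IsCongruence Alg r ∧ ¬ r a b) θ := by
  obtain ⟨θ, -, hθ⟩ := zorn_le_nonempty₀ {r | IsCongruence Alg r ∧ ¬ r a b}
    (fun c hcs hc r hr => ⟨fun x y => ∃ r ∈ c, r x y,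
      ⟨isCongruence_exists_mem_of_isChain hc ⟨r, hr⟩ fun r hr => (hcs hr).1,
        fun ⟨r, hr, hab⟩ => (hcs hr).2 hab⟩,
      fun r hr x y hxy => ⟨r, hr, hxy⟩⟩)
    _ ⟨isCongruence_eq Alg, hab⟩
  exact ⟨θ, hθ⟩

end Congruence

section Quotient

variable {σ : Signature} {A : Type} {Alg : UAlg σ A}

noncomputable def UAlg.quotient (Alg : UAlg σ A) (θ : A → A → Prop) (hθ : Equivalence θ) :
    UAlg σ (Quotient ⟨θ, hθ⟩) :=
  ⟨fun o x => ⟦Alg.interp o fun j => (x j).out⟧⟩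

theorem isHom_quotient_mk {θ : A → A → Prop} (hθ : IsCongruence Alg θ) :
    IsHom Alg (Alg.quotient θ hθ.1) (Quotient.mk _) := fun o x =>
  Quotient.sound <| hθ.2 o _ _ fun j => hθ.1.symm (Quotient.mk_out (s := ⟨θ, hθ.1⟩) (x j))

theorem isSI_of_maximal_ker {C : Type} {AlgC : UAlg σ C} {f : A → C} (hf : IsHom Alg AlgC f)
    (hsurj : Function.Surjective f) {a b : A}
    (hmax : Maximal (fun r => IsCongruence Alg r ∧ ¬ r a b) (fun x y => f x = f y)) :
    IsSI AlgC := by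
  refine ⟨f a, f b, hmax.1.2, fun ψ hψ hψne => ?_⟩
  by_contra hψab
  -- the pullback of `ψ` contains the kernel and avoids `(a, b)`, so it is the kernel
  have hle := hmax.2 ⟨hψ.comap hf, hψab⟩ fun x y (hxy : f x = f y) => hxy ▸ hψ.1.refl _
  refine hψne (funext fun u => funext fun v =>
    propext ⟨fun huv => ?_, fun h => h ▸ hψ.1.refl u⟩)
  obtain ⟨x, rfl⟩ := hsurj u
  obtain ⟨y, rfl⟩ := hsurj v
  exact hle x y huv

theorem exists_isSI_image_separating (Alg : UAlg σ A) {a b : A} (hab : a ≠ b) :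
    ∃ (C : Type) (AlgC : UAlg σ C) (f : A → C),
      IsHom Alg AlgC f ∧ Function.Surjective f ∧ f a ≠ f b ∧ IsSI AlgC := by
  obtain ⟨θ, hθ⟩ := exists_maximal_isCongruence_not_rel Alg hab
  have hker : (fun x y => (⟦x⟧ : Quotient ⟨θ, hθ.1.1.1⟩) = ⟦y⟧) = θ :=
    funext fun x => funext fun y => propext Quotient.eq
  have hf := isHom_quotient_mk hθ.1.1
  refine ⟨_, _, _, hf, Quotient.mk_surjective, fun h => hθ.1.2 (Quotient.exact h), ?_⟩
  exact isSI_of_maximal_ker hf Quotient.mk_surjective (hker ▸ hθ)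

end Quotient

section Quackenbush

variable {σ : Signature} {A : Type} {Alg : UAlg σ A}

theorem genSub_isSubalgebra (Alg : UAlg σ A) (s : Set A) : IsSubalgebra Alg (genSub Alg s) :=
  fun o x hx t ht => ht.1 o x fun j => hx j t ht

theorem subset_genSub (Alg : UAlg σ A) (s : Set A) : s ⊆ genSub Alg s :=
  fun _ hz _ ht => ht.2 hz

def ForcesOn (Alg : UAlg σ A) (F : Set A) (p q x y : A) : Prop :=
  ∀ (S : Set A) (hS : IsSubalgebra Alg S), F ⊆ S → ∀ θ : S → S → Prop,
    IsCongruence (Alg.sub S hS) θ →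
      Relation.Map θ (↑) (↑) p q → Relation.Map θ (↑) (↑) x y

/-- Congruence generation is finitary: the pairs forced by `(p, q)` on a finite set already
form a congruence, which therefore contains `Cg(p, q)`. -/
theorem isCongruence_exists_finite_forcesOn (Alg : UAlg σ A) (p q : A) :
    IsCongruence Alg (fun x y => ∃ F : Set A, F.Finite ∧ ForcesOn Alg F p q x y) := by
  refine ⟨⟨fun x => ⟨{x}, Set.finite_singleton x, fun S hS hF θ hθ _ => ?_⟩, ?_, ?_⟩,
    ?_⟩
  · have hx : x ∈ S := hF rfl
    exact ⟨⟨x, hx⟩, ⟨x, hx⟩, hθ.1.refl _, rfl, rfl⟩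
  · rintro x y ⟨F, hF, hxy⟩
    refine ⟨F, hF, fun S hS hFS θ hθ hpq => ?_⟩
    obtain ⟨x', y', h, rfl, rfl⟩ := hxy S hS hFS θ hθ hpq
    exact ⟨y', x', hθ.1.symm h, rfl, rfl⟩
  · rintro x y z ⟨F, hF, hxy⟩ ⟨F', hF', hyz⟩
    refine ⟨F ∪ F', hF.union hF', fun S hS hFS θ hθ hpq => ?_⟩
    obtain ⟨x', y', h, rfl, rfl⟩ := hxy S hS (Set.subset_union_left.trans hFS) θ hθ hpq
    obtain ⟨y'', z', h', hy, rfl⟩ := hyz S hS (Set.subset_union_right.trans hFS) θ hθ hpq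
    exact ⟨x', z', hθ.1.trans h (Subtype.ext hy ▸ h'), rfl, rfl⟩
  · intro o x y h
    choose F hF hxy using h
    refine ⟨⋃ i, F i, Set.finite_iUnion hF, fun S hS hFS θ hθ hpq => ?_⟩
    choose x' y' h hx hy using fun i =>
      hxy i S hS ((Set.subset_iUnion F i).trans hFS) θ hθ hpq
    exact ⟨_, _, hθ.2 o x' y' h, congrArg (Alg.interp o) (funext hx),
      congrArg (Alg.interp o) (funext hy)⟩

theorem exists_finite_forcesOn_of_monolith {a b : A}
    (hmono : ∀ θ, IsCongruence Alg θ → θ ≠ (fun x y => x = y) → θ a b) {p q : A}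
    (hpq : p ≠ q) : ∃ F : Set A, F.Finite ∧ ForcesOn Alg F p q a b :=
  hmono _ (isCongruence_exists_finite_forcesOn Alg p q) fun h =>
    hpq ((congrFun₂ h p q).mp ⟨∅, Set.finite_empty, fun _ _ _ _ _ => id⟩)

theorem exists_finite_subalgebra_isSI_image_card_ge [Infinite A] (hSI : IsSI Alg)
    (hLF : ∀ t : Set A, t.Finite → (genSub Alg t).Finite) (m : ℕ) :
    ∃ (S : Set A) (hS : IsSubalgebra Alg S) (C : Type) (AlgC : UAlg σ C) (f : S → C),
      IsHom (Alg.sub S hS) AlgC f ∧ Function.Surjective f ∧ IsSI AlgC ∧ Finite C ∧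
        m ≤ Nat.card C := by
  obtain ⟨a, b, hab, hmono⟩ := hSI
  let c : Fin m ↪ A := Fin.valEmbedding.trans (Infinite.natEmbedding A)
  have hforcing (i j : Fin m) :
      ∃ F : Set A, F.Finite ∧ (i ≠ j → ForcesOn Alg F (c i) (c j) a b) := by
    by_cases hij : i = j
    · exact ⟨∅, Set.finite_empty, fun h => (h hij).elim⟩
    · obtain ⟨F, hF, hforces⟩ := exists_finite_forcesOn_of_monolith hmono (c.injective.ne hij)
      exact ⟨F, hF, fun _ => hforces⟩
  choose F hFfin hforces using hforcing
  set G : Set A := {a, b} ∪ Set.range c ∪ ⋃ i, ⋃ j, F i j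
  have hGfin : G.Finite := ((Set.toFinite {a, b}).union (Set.finite_range c)).union
    (Set.finite_iUnion fun i => Set.finite_iUnion fun j => hFfin i j)
  set S := genSub Alg G
  have hS := genSub_isSubalgebra Alg G
  have hGS := subset_genSub Alg G
  have : Finite S := (hLF G hGfin).to_subtype
  have hcS (i) : c i ∈ S := hGS (Or.inl (Or.inr ⟨i, rfl⟩))
  let a₀ : S := ⟨a, hGS (by simp [G])⟩
  let b₀ : S := ⟨b, hGS (by simp [G])⟩
  obtain ⟨C, AlgC, f, hf, hsurj, hfab, hSIC⟩ :=
    exists_isSI_image_separating (Alg.sub S hS) (a := a₀) (b := b₀)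
      (by simpa [a₀, b₀] using hab)
  have : Finite C := Finite.of_surjective f hsurj
  have hinj : Function.Injective fun i => f ⟨c i, hcS i⟩ := by
    intro i j hfij
    by_contra hij
    have hFS : F i j ⊆ S := fun z hz => hGS (Or.inr (Set.mem_iUnion₂.2 ⟨i, j, hz⟩))
    obtain ⟨a', b', h, ha, hb⟩ :=
      hforces i j hij S hS hFS _ (isCongruence_ker hf) ⟨_, _, hfij, rfl, rfl⟩
    rw [show a' = a₀ from Subtype.ext ha, show b' = b₀ from Subtype.ext hb] at h
    exact hfab h
  refine ⟨S, hS, C, AlgC, f, hf, hsurj, hSIC, this, ?_⟩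
  simpa using Nat.card_le_card_of_injective _ hinj

end Quackenbush

theorem stmt_17_general {σ : Signature}
    (V : (B : Type) → UAlg σ B → Prop)
    (hH : ∀ (B : Type) (AlgB : UAlg σ B) (C : Type) (AlgC : UAlg σ C) (f : B → C),
      V B AlgB → IsHom AlgB AlgC f → Function.Surjective f → V C AlgC)
    (hS : ∀ (B : Type) (AlgB : UAlg σ B) (t : Set B) (ht : IsSubalgebra AlgB t),
      V B AlgB → V t (UAlg.sub AlgB t ht))
    (hLF : ∀ (B : Type) (AlgB : UAlg σ B), V B AlgB →
      ∀ t : Set B, t.Finite → (genSub AlgB t).Finite) :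
    -- (1) a finite bound on SIs gives residual finiteness:
    (∀ n : ℕ,
      (∀ (B : Type) (AlgB : UAlg σ B), V B AlgB → IsSI AlgB →
        Finite B ∧ Nat.card B ≤ n) →
      ∀ (B : Type) (AlgB : UAlg σ B), V B AlgB → ∀ a b : B, a ≠ b →
        ∃ (C : Type) (AlgC : UAlg σ C) (f : B → C), Finite C ∧
          IsHom AlgB AlgC f ∧ Function.Surjective f ∧ f a ≠ f b) ∧
    -- (2) an infinite SI yields arbitrarily large finite SIs:
    ((∃ (B : Type) (AlgB : UAlg σ B), V B AlgB ∧ IsSI AlgB ∧ Infinite B) →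
      ∀ m : ℕ, ∃ (B : Type) (AlgB : UAlg σ B), V B AlgB ∧ IsSI AlgB ∧ Finite B ∧
        m ≤ Nat.card B) ∧
    -- (3) boundedness of the finite SIs gives: all SIs finite, and a finite residual bound:
    ((∃ n : ℕ, ∀ (B : Type) (AlgB : UAlg σ B), V B AlgB → IsSI AlgB → Finite B →
        Nat.card B ≤ n) →
      (∀ (B : Type) (AlgB : UAlg σ B), V B AlgB → IsSI AlgB → Finite B) ∧
      ∃ n : ℕ, ∀ (B : Type) (AlgB : UAlg σ B), V B AlgB → ∀ a b : B, a ≠ b →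
        ∃ (C : Type) (AlgC : UAlg σ C) (f : B → C), Finite C ∧ Nat.card C ≤ n ∧
          IsHom AlgB AlgC f ∧ Function.Surjective f ∧ f a ≠ f b) := by
  have separate (B : Type) (AlgB : UAlg σ B) (hB : V B AlgB) {a b : B} (hab : a ≠ b) :
      ∃ (C : Type) (AlgC : UAlg σ C) (f : B → C), V C AlgC ∧ IsHom AlgB AlgC f ∧
        Function.Surjective f ∧ f a ≠ f b ∧ IsSI AlgC := by
    obtain ⟨C, AlgC, f, hf, hsurj, hfab, hSI⟩ := exists_isSI_image_separating AlgB hab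
    exact ⟨C, AlgC, f, hH B AlgB C AlgC f hB hf hsurj, hf, hsurj, hfab, hSI⟩
  have large : (∃ (B : Type) (AlgB : UAlg σ B), V B AlgB ∧ IsSI AlgB ∧ Infinite B) →
      ∀ m : ℕ, ∃ (B : Type) (AlgB : UAlg σ B), V B AlgB ∧ IsSI AlgB ∧ Finite B ∧
        m ≤ Nat.card B := by
    rintro ⟨B, AlgB, hB, hSI, hinf⟩ m
    obtain ⟨S, hS', C, AlgC, f, hf, hsurj, hSIC, hC, hm⟩ :=
      exists_finite_subalgebra_isSI_image_card_ge hSI (hLF B AlgB hB) m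
    exact ⟨C, AlgC, hH S _ C AlgC f (hS B AlgB S hS' hB) hf hsurj, hSIC, hC, hm⟩
  refine ⟨fun n hn B AlgB hB a b hab => ?_, large, fun ⟨n, hn⟩ => ?_⟩
  · obtain ⟨C, AlgC, f, hC, hf, hsurj, hfab, hSI⟩ := separate B AlgB hB hab
    exact ⟨C, AlgC, f, (hn C AlgC hC hSI).1, hf, hsurj, hfab⟩
  · have allFinite (B : Type) (AlgB : UAlg σ B) (hB : V B AlgB) (hSI : IsSI AlgB) :
        Finite B := by
      by_contra hinf
      obtain ⟨C, AlgC, hC, hSIC, hfin, hle⟩ :=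
        large ⟨B, AlgB, hB, hSI, not_finite_iff_infinite.mp hinf⟩ (n + 1)
      have := hn C AlgC hC hSIC hfin
      omega
    refine ⟨allFinite, n, fun B AlgB hB a b hab => ?_⟩
    obtain ⟨C, AlgC, f, hC, hf, hsurj, hfab, hSI⟩ := separate B AlgB hB hab
    have hfin := allFinite C AlgC hC hSI
    exact ⟨C, AlgC, f, hfin, hn C AlgC hC hSI hfin, hf, hsurj, hfab⟩

/-- For a locally finite variety V (a class of algebras closed under H, S
and P): (1) if every SI member is finite of size ≤ n then V is residually finite;
(2) if V has an infinite SI member then it has arbitrarily large finite SI members;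
(3) hence if the finite SI members of V have bounded size, every SI member of V is
finite and V has a finite residual bound. -/
theorem stmt_17 {σ : Signature}
    (V : (B : Type) → UAlg σ B → Prop)
    (hH : ∀ (B : Type) (AlgB : UAlg σ B) (C : Type) (AlgC : UAlg σ C) (f : B → C),
      V B AlgB → IsHom AlgB AlgC f → Function.Surjective f → V C AlgC)
    (hS : ∀ (B : Type) (AlgB : UAlg σ B) (t : Set B) (ht : IsSubalgebra AlgB t),
      V B AlgB → V t (UAlg.sub AlgB t ht))
    (hP : ∀ (I : Type) (B : I → Type) (AlgB : ∀ i, UAlg σ (B i)),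
      (∀ i, V (B i) (AlgB i)) → V (∀ i, B i) (UAlg.pi AlgB))
    (hLF : ∀ (B : Type) (AlgB : UAlg σ B), V B AlgB →
      ∀ t : Set B, t.Finite → (genSub AlgB t).Finite) :
    -- (1) a finite bound on SIs gives residual finiteness:
    (∀ n : ℕ,
      (∀ (B : Type) (AlgB : UAlg σ B), V B AlgB → IsSI AlgB →
        Finite B ∧ Nat.card B ≤ n) →
      ∀ (B : Type) (AlgB : UAlg σ B), V B AlgB → ∀ a b : B, a ≠ b →
        ∃ (C : Type) (AlgC : UAlg σ C) (f : B → C), Finite C ∧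
          IsHom AlgB AlgC f ∧ Function.Surjective f ∧ f a ≠ f b) ∧
    -- (2) an infinite SI yields arbitrarily large finite SIs:
    ((∃ (B : Type) (AlgB : UAlg σ B), V B AlgB ∧ IsSI AlgB ∧ Infinite B) →
      ∀ m : ℕ, ∃ (B : Type) (AlgB : UAlg σ B), V B AlgB ∧ IsSI AlgB ∧ Finite B ∧
        m ≤ Nat.card B) ∧
    -- (3) boundedness of the finite SIs gives: all SIs finite, and a finite residual bound:
    ((∃ n : ℕ, ∀ (B : Type) (AlgB : UAlg σ B), V B AlgB → IsSI AlgB → Finite B →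
        Nat.card B ≤ n) →
      (∀ (B : Type) (AlgB : UAlg σ B), V B AlgB → IsSI AlgB → Finite B) ∧
      ∃ n : ℕ, ∀ (B : Type) (AlgB : UAlg σ B), V B AlgB → ∀ a b : B, a ≠ b →
        ∃ (C : Type) (AlgC : UAlg σ C) (f : B → C), Finite C ∧ Nat.card C ≤ n ∧
          IsHom AlgB AlgC f ∧ Function.Surjective f ∧ f a ≠ f b) :=
  stmt_17_general V hH hS hLF
end
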